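/- arXiv:2203.15193 — 2 statements merged into one kernel-verified Lean document; each statement's English description precedes it below -/
import Mathlib

section
/- de Caen's lower bound on the probability of a union: for any finite sequence of events A_1, …, A_N in a probability space, each of positive probability, P(⋃_{l=1}^N A_l) ≥ ∑_{l=1}^N P(A_l)² / (∑_{l'=1}^N P(A_l ∩ A_{l'})). -/
/-!
Let `m x` be the number of events containing `x`. Then `∑ j, P(A i ∩ A j) = ∫_{A i} m`, and
Cauchy–Schwarz on `A i` gives `P(A i)² ≤ (∫_{A i} m) (∫_{A i} 1/m)`. Summed over `i`, the integrals
`∫_{A i} 1/m` count every point of the union with total weight one. Everything happens on the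
finitely many atoms of the Boolean algebra generated by the events, where integrals are finite sums.
-/

open MeasureTheory Finset

section Weighted

variable {X ι : Type*} [Fintype X] [Fintype ι]

open Classical in
lemma sum_sum_inter_eq_sum_card_mul (p : X → ℝ) (E : ι → Set X) (i : ι) :
    ∑ j, ∑ x with x ∈ E i ∩ E j, p x = ∑ x with x ∈ E i, #{j | x ∈ E j} * p x := by
  calc ∑ j, ∑ x with x ∈ E i ∩ E j, p x
      = ∑ j, ∑ x with x ∈ E i, if x ∈ E j then p x else 0 := by
        simp only [sum_filter, Set.mem_inter_iff, ite_and]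
    _ = ∑ x with x ∈ E i, #{j | x ∈ E j} * p x := by
        rw [sum_comm]
        simp only [sum_ite, sum_const_zero, add_zero, sum_const, nsmul_eq_mul]

open Classical in
lemma sq_sum_div_le_sum_div_card (p : X → ℝ) (hp : ∀ x, 0 ≤ p x) (E : ι → Set X) (i : ι) :
    (∑ x with x ∈ E i, p x) ^ 2 / ∑ x with x ∈ E i, #{j | x ∈ E j} * p x
      ≤ ∑ x with x ∈ E i, p x / #{j | x ∈ E j} := by
  refine div_le_of_le_mul₀ (sum_nonneg fun x _ => by have := hp x; positivity)
    (sum_nonneg fun x _ => by have := hp x; positivity) ?_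
  rw [mul_comm]
  refine sum_sq_le_sum_mul_sum_of_sq_le_mul _ (fun x _ => by have := hp x; positivity)
    (fun x _ => by have := hp x; positivity) fun x hx => le_of_eq ?_
  have hcard : (#{j | x ∈ E j} : ℝ) ≠ 0 := by
    rw [mem_filter] at hx
    exact Nat.cast_ne_zero.mpr (card_ne_zero.mpr ⟨i, by simpa using hx.2⟩)
  field_simp

open Classical in
lemma sum_sum_div_card_eq_sum_iUnion (p : X → ℝ) (E : ι → Set X) :
    ∑ i, ∑ x with x ∈ E i, p x / #{j | x ∈ E j} = ∑ x with x ∈ ⋃ i, E i, p x := by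
  rw [sum_comm' (t' := univ) (s' := fun x => {i | x ∈ E i}) (by simp), sum_filter]
  refine sum_congr rfl fun x _ => ?_
  rw [sum_const, nsmul_eq_mul]
  split_ifs with hx
  · obtain ⟨i, hi⟩ := Set.mem_iUnion.mp hx
    have hcard : (#{j | x ∈ E j} : ℝ) ≠ 0 :=
      Nat.cast_ne_zero.mpr (card_ne_zero.mpr ⟨i, by simpa using hi⟩)
    field_simp
  · simp_all

open Classical in
theorem sum_sq_div_sum_inter_le_sum_iUnion (p : X → ℝ) (hp : ∀ x, 0 ≤ p x) (E : ι → Set X) :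
    ∑ i, (∑ x with x ∈ E i, p x) ^ 2 / ∑ j, ∑ x with x ∈ E i ∩ E j, p x
      ≤ ∑ x with x ∈ ⋃ i, E i, p x := by
  simp only [sum_sum_inter_eq_sum_card_mul]
  grw [sum_le_sum fun i _ => sq_sum_div_le_sum_div_card p hp E i]
  exact (sum_sum_div_card_eq_sum_iUnion p E).le

end Weighted

lemma measureReal_preimage_eq_sum_fiber {Ω β : Type*} [MeasurableSpace Ω] {μ : Measure Ω}
    [IsFiniteMeasure μ] [Fintype β] {f : Ω → β} (hf : ∀ b, MeasurableSet (f ⁻¹' {b}))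
    (S : Set β) [DecidablePred (· ∈ S)] :
    μ.real (f ⁻¹' S) = ∑ b with b ∈ S, μ.real (f ⁻¹' {b}) := by
  rw [sum_measureReal_preimage_singleton _ fun b _ => hf b, coe_filter_univ, Set.ofPred_mem_eq]

theorem sum_sq_div_sum_measureReal_inter_le_measureReal_iUnion {Ω ι : Type*}
    [MeasurableSpace Ω] (μ : Measure Ω) [IsFiniteMeasure μ] [Fintype ι] (A : ι → Set Ω)
    (hA : ∀ i, MeasurableSet (A i)) :
    ∑ i, μ.real (A i) ^ 2 / ∑ j, μ.real (A i ∩ A j) ≤ μ.real (⋃ i, A i) := by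
  classical
  let atom : Ω → (ι → Bool) := fun ω i => decide (ω ∈ A i)
  have hatom : Measurable atom :=
    measurable_pi_iff.mpr fun i => measurable_to_bool (by convert hA i; ext; simp [atom])
  have hpreimage : ∀ i, atom ⁻¹' {b | b i} = A i := fun i => by ext; simp [atom]
  have key := sum_sq_div_sum_inter_le_sum_iUnion (fun b => μ.real (atom ⁻¹' {b}))
    (fun _ => measureReal_nonneg) (fun i => {b | b i})
  simpa only [← measureReal_preimage_eq_sum_fiber fun b => hatom (measurableSet_singleton b),
    Set.preimage_inter, Set.preimage_iUnion, hpreimage] using key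

theorem stmt_1_general {Ω : Type*} [MeasurableSpace Ω] (μ : Measure Ω) [IsProbabilityMeasure μ]
    (N : ℕ) (A : Fin N → Set Ω) (hmeas : ∀ l, MeasurableSet (A l)) :
    ∑ l, ((μ (A l)).toReal) ^ 2 / (∑ l', (μ (A l ∩ A l')).toReal)
      ≤ (μ (⋃ l, A l)).toReal :=
  sum_sq_div_sum_measureReal_inter_le_measureReal_iUnion μ A hmeas

/-- de Caen's lower bound on the probability of a union. -/
theorem stmt_1 {Ω : Type*} [MeasurableSpace Ω] (μ : Measure Ω) [IsProbabilityMeasure μ]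
    (N : ℕ) (A : Fin N → Set Ω) (hmeas : ∀ l, MeasurableSet (A l))
    (hpos : ∀ l, 0 < (μ (A l)).toReal) :
    ∑ l, ((μ (A l)).toReal) ^ 2 / (∑ l', (μ (A l ∩ A l')).toReal)
      ≤ (μ (⋃ l, A l)).toReal :=
  stmt_1_general μ N A hmeas
end

section
/- Jensen-type bound for the ternary source mutual information: for nonnegative reals p₀₁, p₁₀, p₀₂, p₁₂ with 3p₀₁ + 3p₀₂ ≤ 1, 3p₁₀ + 3p₁₂ ≤ 1, and 3p₀₂ + 3p₀₁ − 3p₁₀ ≥ 0, 3p₁₂ − 3p₀₁ + 3p₁₀ ≥ 0, 3(p₀₂ + p₀₁ − p₁₀) + 3(p₁₂ − p₀₁ + p₁₀) ≤ 1, one has H₃(3p₀₁, 3p₀₂) + H₃(3p₁₀, 3p₁₂) + H₃(3p₀₂ + 3p₀₁ − 3p₁₀, 3p₁₂ − 3p₀₁ + 3p₁₀) ≤ 2·H₃(3(p₀₁+p₁₀)/2, 3(p₀₂+p₁₂)/2) + H₃(3(p₀₂+p₁₂)/2, 3(p₀₂+p₁₂)/2), with equality if and only if p₀₁ = p₁₀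 and p₀₂ = p₁₂. -/
/-! Writing `H3 a b = η a + η b + η (1 - a - b)` with `η x = -x log x`, the bound is the sum of
two instances of midpoint concavity of `η`, applied coordinatewise: to the first two rows, and to
the third row and its mirror image, which share the last coordinate `1 - a - b`. Equality in the
first forces the two rows to coincide, by strict concavity of `η`. -/

open Real

/-- Ternary entropy of the probability vector `(a, b, 1 - a - b)` (natural log,
with the convention `0 log 0 = 0`). -/
noncomputable def H3 (a b : ℝ) : ℝ :=
  -(a * Real.log a) - b * Real.log b - (1 - a - b) * Real.log (1 - a - b)

lemma ConcaveOn.add_le_two_mul_midpoint {s : Set ℝ} {f : ℝ → ℝ} (hf : ConcaveOn ℝ s f)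
    {x y : ℝ} (hx : x ∈ s) (hy : y ∈ s) :
    f x + f y ≤ 2 * f ((x + y) / 2) := by
  have h := hf.2 hx hy (by norm_num : (0 : ℝ) ≤ 1 / 2) (by norm_num : (0 : ℝ) ≤ 1 / 2)
    (by norm_num)
  simp only [smul_eq_mul] at h
  rw [show (1 / 2 : ℝ) * x + 1 / 2 * y = (x + y) / 2 by ring] at h
  linarith

lemma StrictConcaveOn.add_lt_two_mul_midpoint {s : Set ℝ} {f : ℝ → ℝ}
    (hf : StrictConcaveOn ℝ s f) {x y : ℝ} (hx : x ∈ s) (hy : y ∈ s) (hxy : x ≠ y) :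
    f x + f y < 2 * f ((x + y) / 2) := by
  have h := hf.2 hx hy hxy (by norm_num : (0 : ℝ) < 1 / 2) (by norm_num : (0 : ℝ) < 1 / 2)
    (by norm_num)
  simp only [smul_eq_mul] at h
  rw [show (1 / 2 : ℝ) * x + 1 / 2 * y = (x + y) / 2 by ring] at h
  linarith

lemma H3_eq_negMulLog (a b : ℝ) :
    H3 a b = negMulLog a + negMulLog b + negMulLog (1 - a - b) := by
  simp only [H3, negMulLog_eq_neg]
  ring

section Midpoint

variable {a b c d : ℝ}

lemma H3_le_H3_midpoint_midpoint (ha : 0 ≤ a) (hb : 0 ≤ b) :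
    H3 a b ≤ H3 ((a + b) / 2) ((a + b) / 2) := by
  have h := concaveOn_negMulLog.add_le_two_mul_midpoint (Set.mem_Ici.2 ha) (Set.mem_Ici.2 hb)
  rw [H3_eq_negMulLog, H3_eq_negMulLog, show 1 - (a + b) / 2 - (a + b) / 2 = 1 - a - b by ring]
  linarith

lemma H3_add_H3_le (ha : 0 ≤ a) (hb : 0 ≤ b) (hc : 0 ≤ c) (hd : 0 ≤ d)
    (hab : a + b ≤ 1) (hcd : c + d ≤ 1) :
    H3 a b + H3 c d ≤ 2 * H3 ((a + c) / 2) ((b + d) / 2) := by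
  have h₁ := concaveOn_negMulLog.add_le_two_mul_midpoint (Set.mem_Ici.2 ha) (Set.mem_Ici.2 hc)
  have h₂ := concaveOn_negMulLog.add_le_two_mul_midpoint (Set.mem_Ici.2 hb) (Set.mem_Ici.2 hd)
  have h₃ := concaveOn_negMulLog.add_le_two_mul_midpoint
    (Set.mem_Ici.2 (by linarith : 0 ≤ 1 - a - b)) (Set.mem_Ici.2 (by linarith : 0 ≤ 1 - c - d))
  simp only [H3_eq_negMulLog]
  rw [show 1 - (a + c) / 2 - (b + d) / 2 = (1 - a - b + (1 - c - d)) / 2 by ring]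
  linarith

lemma H3_add_H3_lt (ha : 0 ≤ a) (hb : 0 ≤ b) (hc : 0 ≤ c) (hd : 0 ≤ d)
    (hab : a + b ≤ 1) (hcd : c + d ≤ 1) (hne : a ≠ c ∨ b ≠ d) :
    H3 a b + H3 c d < 2 * H3 ((a + c) / 2) ((b + d) / 2) := by
  have h₃ := concaveOn_negMulLog.add_le_two_mul_midpoint
    (Set.mem_Ici.2 (by linarith : 0 ≤ 1 - a - b)) (Set.mem_Ici.2 (by linarith : 0 ≤ 1 - c - d))
  have hlt : negMulLog a + negMulLog c + (negMulLog b + negMulLog d)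
      < 2 * negMulLog ((a + c) / 2) + 2 * negMulLog ((b + d) / 2) := by
    rcases hne with hac | hbd
    · have h₁ := strictConcaveOn_negMulLog.add_lt_two_mul_midpoint
        (Set.mem_Ici.2 ha) (Set.mem_Ici.2 hc) hac
      have h₂ := concaveOn_negMulLog.add_le_two_mul_midpoint (Set.mem_Ici.2 hb) (Set.mem_Ici.2 hd)
      linarith
    · have h₁ := concaveOn_negMulLog.add_le_two_mul_midpoint (Set.mem_Ici.2 ha) (Set.mem_Ici.2 hc)
      have h₂ := strictConcaveOn_negMulLog.add_lt_two_mul_midpoint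
        (Set.mem_Ici.2 hb) (Set.mem_Ici.2 hd) hbd
      linarith
  simp only [H3_eq_negMulLog]
  rw [show 1 - (a + c) / 2 - (b + d) / 2 = (1 - a - b + (1 - c - d)) / 2 by ring]
  linarith

lemma H3_add_H3_eq_iff (ha : 0 ≤ a) (hb : 0 ≤ b) (hc : 0 ≤ c) (hd : 0 ≤ d)
    (hab : a + b ≤ 1) (hcd : c + d ≤ 1) :
    H3 a b + H3 c d = 2 * H3 ((a + c) / 2) ((b + d) / 2) ↔ a = c ∧ b = d := by
  constructor
  · intro heq
    by_contra hne
    exact (H3_add_H3_lt ha hb hc hd hab hcd (not_and_or.1 hne)).ne heq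
  · rintro ⟨rfl, rfl⟩
    rw [add_self_div_two, add_self_div_two, two_mul]

end Midpoint

theorem stmt_4_general (p01 p10 p02 p12 : ℝ)
    (h01 : 0 ≤ p01) (h10 : 0 ≤ p10) (h02 : 0 ≤ p02) (h12 : 0 ≤ p12)
    (hrow0 : 3 * p01 + 3 * p02 ≤ 1) (hrow1 : 3 * p10 + 3 * p12 ≤ 1)
    (hrow2a : 0 ≤ 3 * p02 + 3 * p01 - 3 * p10)
    (hrow2b : 0 ≤ 3 * p12 - 3 * p01 + 3 * p10) :
    H3 (3 * p01) (3 * p02) + H3 (3 * p10) (3 * p12) +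
        H3 (3 * p02 + 3 * p01 - 3 * p10) (3 * p12 - 3 * p01 + 3 * p10)
      ≤ 2 * H3 (3 * (p01 + p10) / 2) (3 * (p02 + p12) / 2) +
          H3 (3 * (p02 + p12) / 2) (3 * (p02 + p12) / 2) ∧
    (H3 (3 * p01) (3 * p02) + H3 (3 * p10) (3 * p12) +
        H3 (3 * p02 + 3 * p01 - 3 * p10) (3 * p12 - 3 * p01 + 3 * p10)
      = 2 * H3 (3 * (p01 + p10) / 2) (3 * (p02 + p12) / 2) +
          H3 (3 * (p02 + p12) / 2) (3 * (p02 + p12) / 2)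
      ↔ p01 = p10 ∧ p02 = p12) := by
  have hpair_eq_iff := H3_add_H3_eq_iff (by linarith : 0 ≤ 3 * p01) (by linarith : 0 ≤ 3 * p02)
    (by linarith : 0 ≤ 3 * p10) (by linarith : 0 ≤ 3 * p12) hrow0 hrow1
  have hpair := H3_add_H3_le (by linarith : 0 ≤ 3 * p01) (by linarith : 0 ≤ 3 * p02)
    (by linarith : 0 ≤ 3 * p10) (by linarith : 0 ≤ 3 * p12) hrow0 hrow1
  have hthird := H3_le_H3_midpoint_midpoint hrow2a hrow2b
  rw [← mul_add, ← mul_add] at hpair hpair_eq_iff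
  rw [show 3 * p02 + 3 * p01 - 3 * p10 + (3 * p12 - 3 * p01 + 3 * p10) = 3 * (p02 + p12) by ring]
    at hthird
  refine ⟨by linarith, fun heq => ?_, ?_⟩
  · obtain ⟨h₁, h₂⟩ := hpair_eq_iff.1 (by linarith)
    constructor <;> linarith
  · rintro ⟨rfl, rfl⟩
    ring_nf

/-- Jensen-type bound for the ternary source mutual information, with equality
iff `p₀₁ = p₁₀` and `p₀₂ = p₁₂`. -/
theorem stmt_4 (p01 p10 p02 p12 : ℝ)
    (h01 : 0 ≤ p01) (h10 : 0 ≤ p10) (h02 : 0 ≤ p02) (h12 : 0 ≤ p12)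
    (hrow0 : 3 * p01 + 3 * p02 ≤ 1) (hrow1 : 3 * p10 + 3 * p12 ≤ 1)
    (hrow2a : 0 ≤ 3 * p02 + 3 * p01 - 3 * p10)
    (hrow2b : 0 ≤ 3 * p12 - 3 * p01 + 3 * p10)
    (hrow2c : 3 * (p02 + p01 - p10) + 3 * (p12 - p01 + p10) ≤ 1) :
    H3 (3 * p01) (3 * p02) + H3 (3 * p10) (3 * p12) +
        H3 (3 * p02 + 3 * p01 - 3 * p10) (3 * p12 - 3 * p01 + 3 * p10)
      ≤ 2 * H3 (3 * (p01 + p10) / 2) (3 * (p02 + p12) / 2) +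
          H3 (3 * (p02 + p12) / 2) (3 * (p02 + p12) / 2) ∧
    (H3 (3 * p01) (3 * p02) + H3 (3 * p10) (3 * p12) +
        H3 (3 * p02 + 3 * p01 - 3 * p10) (3 * p12 - 3 * p01 + 3 * p10)
      = 2 * H3 (3 * (p01 + p10) / 2) (3 * (p02 + p12) / 2) +
          H3 (3 * (p02 + p12) / 2) (3 * (p02 + p12) / 2)
      ↔ p01 = p10 ∧ p02 = p12) :=
  stmt_4_general p01 p10 p02 p12 h01 h10 h02 h12 hrow0 hrow1 hrow2a hrow2b
end
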